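/- arXiv:2010.08977 — 11 statements merged into one kernel-verified Lean document; each statement's English description precedes it below -/
import Mathlib

section
/- Let D be a finite set of non-negative integers with 0 ∈ D, |D| = N ≥ 4, whose sum co-array is contiguous. Then the number of pairs of elements of D at distance exactly 1, i.e. |{(a,b) ∈ D × D : a < b, b - a = 1}|, is at least 2. -/
open Pointwise

theorem stmt2 (D : Finset ℕ) (h0 : 0 ∈ D) (hcard : 4 ≤ D.card)
    (L : ℕ) (hL : D.max = (L : WithBot ℕ))
    (hsum : D + D = Finset.Icc 0 (2 * L)) :
    2 ≤ ((D ×ˢ D).filter (fun p => p.1 < p.2 ∧ p.2 - p.1 = 1)).card := by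
  have hLmem : L ∈ D := Finset.mem_of_max hL
  have hle : ∀ x ∈ D, x ≤ L := fun x hx => Finset.le_max_of_eq hx hL
  -- L ≥ 3
  have hsub : D ⊆ Finset.Icc 0 L := fun x hx =>
    Finset.mem_Icc.mpr ⟨Nat.zero_le _, hle x hx⟩
  have hL3 : 3 ≤ L := by
    have := Finset.card_le_card hsub
    simp [Nat.card_Icc] at this
    omega
  -- 1 ∈ D
  have h1 : (1 : ℕ) ∈ D := by
    have : (1 : ℕ) ∈ D + D := by
      rw [hsum]; exact Finset.mem_Icc.mpr ⟨Nat.zero_le _, by omega⟩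
    obtain ⟨a, ha, b, hb, hab⟩ := Finset.mem_add.mp this
    have : b = 1 ∨ a = 1 := by omega
    rcases this with h | h <;> [exact h ▸ hb; exact h ▸ ha]
  -- L - 1 ∈ D
  have hL1 : L - 1 ∈ D := by
    have : 2 * L - 1 ∈ D + D := by
      rw [hsum]; exact Finset.mem_Icc.mpr ⟨Nat.zero_le _, by omega⟩
    obtain ⟨a, ha, b, hb, hab⟩ := Finset.mem_add.mp this
    have haL := hle a ha
    have hbL := hle b hb
    have : a = L - 1 ∨ b = L - 1 := by omega
    rcases this with h | h <;> [exact h ▸ ha; exact h ▸ hb]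
  have hsub2 : ({((0 : ℕ), (1 : ℕ)), (L - 1, L)} : Finset (ℕ × ℕ)) ⊆
      (D ×ˢ D).filter (fun p => p.1 < p.2 ∧ p.2 - p.1 = 1) := by
    intro p hp
    simp only [Finset.mem_insert, Finset.mem_singleton] at hp
    rcases hp with rfl | rfl <;>
      simp_all [Finset.mem_filter, Finset.mem_product] <;> omega
  calc 2 = ({((0 : ℕ), (1 : ℕ)), (L - 1, L)} : Finset (ℕ × ℕ)).card := by
            rw [Finset.card_insert_of_notMem (by simp; omega), Finset.card_singleton]
    _ ≤ _ := Finset.card_le_card hsub2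
end

section
/- Let D be a finite set of non-negative integers with 0 ∈ D whose sum co-array is contiguous. If |D| ≥ 4, then |D|·(|D|+1)/2 > 2·max D + 1, i.e. the array is redundant (R > 1). -/
open Pointwise

theorem stmt3 (D : Finset ℕ) (h0 : 0 ∈ D) (hcard : 4 ≤ D.card)
    (L : ℕ) (hL : D.max = (L : WithBot ℕ))
    (hsum : D + D = Finset.Icc 0 (2 * L)) :
    D.card * (D.card + 1) / 2 > 2 * L + 1 := by
  have hLmem : L ∈ D := Finset.mem_of_max hL
  have hle : ∀ x ∈ D, x ≤ L := by
    intro x hx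
    have := Finset.le_max hx
    rw [hL] at this
    exact WithBot.coe_le_coe.mp this
  -- L ≥ 3
  have hsub : D ⊆ Finset.Icc 0 L := fun x hx => Finset.mem_Icc.mpr ⟨Nat.zero_le _, hle x hx⟩
  have hL3 : 3 ≤ L := by
    have := Finset.card_le_card hsub
    rw [Nat.card_Icc] at this
    omega
  -- 1 ∈ D
  have h1 : 1 ∈ D := by
    have : (1 : ℕ) ∈ D + D := by
      rw [hsum]; exact Finset.mem_Icc.mpr ⟨Nat.zero_le _, by omega⟩
    obtain ⟨a, ha, b, hb, hab⟩ := Finset.mem_add.mp this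
    have : a = 0 ∧ b = 1 ∨ a = 1 ∧ b = 0 := by omega
    rcases this with ⟨_, h⟩ | ⟨h, _⟩ <;> exact h ▸ (by assumption)
  -- L - 1 ∈ D
  have hL1 : L - 1 ∈ D := by
    have : (2 * L - 1 : ℕ) ∈ D + D := by
      rw [hsum]; exact Finset.mem_Icc.mpr ⟨Nat.zero_le _, by omega⟩
    obtain ⟨a, ha, b, hb, hab⟩ := Finset.mem_add.mp this
    have haL := hle a ha
    have hbL := hle b hb
    have : a = L - 1 ∨ b = L - 1 := by omega
    rcases this with h | h <;> [exact h ▸ ha; exact h ▸ hb]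
  -- the sum map
  set f : Sym2 ℕ → ℕ := Sym2.lift ⟨(· + ·), Nat.add_comm⟩ with hf
  have hfmk : ∀ a b : ℕ, f s(a, b) = a + b := fun a b => rfl
  have hmem : s(1, L - 1) ∈ D.sym2 := Finset.mk_mem_sym2_iff.mpr ⟨h1, hL1⟩
  have hsurj : Set.SurjOn f ((D.sym2.erase s(1, L - 1)) : Set (Sym2 ℕ))
      ((Finset.Icc 0 (2 * L)) : Set ℕ) := by
    intro c hc
    have : c ∈ D + D := by rw [hsum]; exact_mod_cast hc
    obtain ⟨a, ha, b, hb, hab⟩ := Finset.mem_add.mp this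
    by_cases hcase : s(a, b) = s(1, L - 1)
    · -- then c = L; use s(0, L) instead
      have habL : a + b = L := by
        rw [Sym2.eq_iff] at hcase
        omega
      refine ⟨s(0, L), ?_, ?_⟩
      · refine Finset.mem_coe.mpr (Finset.mem_erase.mpr ⟨?_, Finset.mk_mem_sym2_iff.mpr ⟨h0, hLmem⟩⟩)
        intro h
        rw [Sym2.eq_iff] at h
        omega
      · rw [hfmk]; omega
    · exact ⟨s(a, b), Finset.mem_coe.mpr (Finset.mem_erase.mpr
        ⟨hcase, Finset.mk_mem_sym2_iff.mpr ⟨ha, hb⟩⟩), by rw [hfmk]; exact hab⟩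
  have hcardle := Finset.card_le_card_of_surjOn f hsurj
  rw [Finset.card_erase_of_mem hmem, Finset.card_sym2, Nat.card_Icc] at hcardle
  have hchoose : Nat.choose (D.card + 1) 2 = D.card * (D.card + 1) / 2 := by
    rw [Nat.choose_two_right]
    simp [Nat.mul_comm]
  rw [hchoose] at hcardle
  have : 2 ≤ D.card * (D.card + 1) / 2 := by
    have : 4 * 5 / 2 ≤ D.card * (D.card + 1) / 2 :=
      Nat.div_le_div_right (Nat.mul_le_mul hcard (by omega))
    omega
  omega
end

section
/- Let D be a finite set of non-negative integers that is symmetric about its aperture, i.e. D = {L - d : d ∈ D} with L = max D. Then the sum co-array of D is contiguous ({0,...,2L}) if and only if the difference co-array of D is contiguous ({-L,...,L}). -/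
open Pointwise

theorem stmt4 (D : Finset ℕ) (hne : D.Nonempty)
    (L : ℕ) (hL : D.max = (L : WithBot ℕ))
    (hsym : D = D.image (fun d => L - d)) :
    D + D = Finset.Icc 0 (2 * L) ↔
      D.image ((↑) : ℕ → ℤ) - D.image ((↑) : ℕ → ℤ)
        = Finset.Icc (-(L : ℤ)) (L : ℤ) := by
  have hle : ∀ d ∈ D, d ≤ L := by
    intro d hd
    have := Finset.le_max hd
    rw [hL] at this
    exact WithBot.coe_le_coe.mp this
  have hmem : ∀ d ∈ D, L - d ∈ D := by
    intro d hd
    rw [hsym]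
    exact Finset.mem_image_of_mem _ hd
  constructor
  · intro h
    ext x
    simp only [Finset.mem_sub, Finset.mem_image, Finset.mem_Icc]
    constructor
    · rintro ⟨a, ⟨a', ha', rfl⟩, b, ⟨b', hb', rfl⟩, rfl⟩
      have h1 := hle a' ha'
      have h2 := hle b' hb'
      omega
    · rintro ⟨h1, h2⟩
      have hx : (x + L).toNat ∈ Finset.Icc 0 (2 * L) := by
        simp only [Finset.mem_Icc]
        omega
      rw [← h, Finset.mem_add] at hx
      obtain ⟨a, ha, b, hb, hab⟩ := hx
      refine ⟨a, ⟨a, ha, rfl⟩, (L - b : ℕ), ⟨L - b, hmem b hb, rfl⟩, ?_⟩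
      have h3 := hle b hb
      have h4 : (x + L).toNat = x + L := by omega
      have : ((a + b : ℕ) : ℤ) = x + L := by rw [hab]; omega
      push_cast at this ⊢
      omega
  · intro h
    ext n
    simp only [Finset.mem_add, Finset.mem_Icc]
    constructor
    · rintro ⟨a, ha, b, hb, rfl⟩
      have := hle a ha; have := hle b hb
      omega
    · rintro ⟨-, h2⟩
      have hx : (n : ℤ) - L ∈ Finset.Icc (-(L : ℤ)) (L : ℤ) := by
        simp only [Finset.mem_Icc]; omega
      rw [← h, Finset.mem_sub] at hx
      obtain ⟨a, ha, b, hb, hab⟩ := hx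
      simp only [Finset.mem_image] at ha hb
      obtain ⟨a', ha', rfl⟩ := ha
      obtain ⟨b', hb', rfl⟩ := hb
      refine ⟨a', ha', L - b', hmem b' hb', ?_⟩
      have := hle a' ha'; have := hle b' hb'
      omega
end

section
/- Let G be a finite set of non-negative integers with 0 ∈ G, let λ ∈ ℕ, let L = max G + λ, and define D = G ∪ (max G - G + λ). Then D + D = {0, ..., 2L} if and only if both (C1): (G - G) ∪ (G + G - L) ∪ (L - (G + G)) ⊇ {0, ..., max G}, and (C2): G + G ⊇ {0, ..., λ - 1}. -/
open Pointwise

theorem stmt5 (G : Finset ℕ) (h0 : 0 ∈ G) (lam : ℕ)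
    (M : ℕ) (hM : G.max = (M : WithBot ℕ)) (L : ℕ) (hLdef : L = M + lam)
    (D : Finset ℕ) (hD : D = G ∪ G.image (fun g => M - g + lam)) :
    D + D = Finset.Icc 0 (2 * L) ↔
      ((Finset.Icc (0 : ℤ) (M : ℤ) ⊆
          (G.image ((↑) : ℕ → ℤ) - G.image ((↑) : ℕ → ℤ)) ∪
          (G.image ((↑) : ℕ → ℤ) + G.image ((↑) : ℕ → ℤ)).image (fun x => x - (L : ℤ)) ∪
          (G.image ((↑) : ℕ → ℤ) + G.image ((↑) : ℕ → ℤ)).image (fun x => (L : ℤ) - x)) ∧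
        Finset.range lam ⊆ G + G) := by
  have hMG : M ∈ G := Finset.mem_of_max hM
  have hgM : ∀ g ∈ G, g ≤ M := fun g hg => by
    have := Finset.le_max hg
    rw [hM] at this
    exact WithBot.coe_le_coe.mp this
  have hML : M ≤ L := by omega
  -- membership in D
  have hDmem : ∀ d, d ∈ D ↔ d ∈ G ∨ ∃ g ∈ G, d = M - g + lam := by
    intro d
    simp [hD, Finset.mem_union, Finset.mem_image, eq_comm]
  -- cast of hat elements
  have hhat : ∀ g ∈ G, ((M - g + lam : ℕ) : ℤ) = (L : ℤ) - g := by
    intro g hg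
    have := hgM g hg
    push_cast [Nat.cast_sub this]
    omega
  -- cover characterization
  have hcover : ∀ k : ℕ, k ∈ D + D ↔
      ((∃ a ∈ G, ∃ b ∈ G, k = a + b) ∨
       (∃ a ∈ G, ∃ b ∈ G, (k : ℤ) = (L : ℤ) + a - b) ∨
       (∃ a ∈ G, ∃ b ∈ G, (k : ℤ) = 2 * (L : ℤ) - a - b)) := by
    intro k
    rw [Finset.mem_add]
    constructor
    · rintro ⟨d1, hd1, d2, hd2, rfl⟩
      rw [hDmem] at hd1 hd2
      rcases hd1 with h1 | ⟨a, ha, rfl⟩ <;> rcases hd2 with h2 | ⟨b, hb, rfl⟩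
      · exact Or.inl ⟨d1, h1, d2, h2, rfl⟩
      · refine Or.inr (Or.inl ⟨d1, h1, b, hb, ?_⟩)
        push_cast [hhat b hb]
        ring
      · refine Or.inr (Or.inl ⟨d2, h2, a, ha, ?_⟩)
        push_cast [hhat a ha]
        ring
      · refine Or.inr (Or.inr ⟨a, ha, b, hb, ?_⟩)
        push_cast [hhat a ha, hhat b hb]
        ring
    · rintro (⟨a, ha, b, hb, rfl⟩ | ⟨a, ha, b, hb, hk⟩ | ⟨a, ha, b, hb, hk⟩)
      · exact ⟨a, (hDmem a).mpr (Or.inl ha), b, (hDmem b).mpr (Or.inl hb), rfl⟩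
      · refine ⟨a, (hDmem a).mpr (Or.inl ha), M - b + lam,
          (hDmem _).mpr (Or.inr ⟨b, hb, rfl⟩), ?_⟩
        have := hhat b hb
        have hb' := hgM b hb
        omega
      · refine ⟨M - a + lam, (hDmem _).mpr (Or.inr ⟨a, ha, rfl⟩), M - b + lam,
          (hDmem _).mpr (Or.inr ⟨b, hb, rfl⟩), ?_⟩
        have := hhat a ha
        have := hhat b hb
        have := hgM a ha
        have := hgM b hb
        omega
  -- membership in big union
  have hC1mem : ∀ i : ℤ, (i ∈
      (G.image ((↑) : ℕ → ℤ) - G.image ((↑) : ℕ → ℤ)) ∪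
      (G.image ((↑) : ℕ → ℤ) + G.image ((↑) : ℕ → ℤ)).image (fun x => x - (L : ℤ)) ∪
      (G.image ((↑) : ℕ → ℤ) + G.image ((↑) : ℕ → ℤ)).image (fun x => (L : ℤ) - x)) ↔
      (∃ a ∈ G, ∃ b ∈ G, i = (a : ℤ) - b ∨ i = (a : ℤ) + b - L ∨ i = (L : ℤ) - (a + b)) := by
    intro i
    simp only [Finset.mem_union, Finset.mem_sub, Finset.mem_add, Finset.mem_image]
    constructor
    · rintro ((⟨x, ⟨a, ha, rfl⟩, y, ⟨b, hb, rfl⟩, rfl⟩ |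
        ⟨x, ⟨y, ⟨a, ha, rfl⟩, z, ⟨b, hb, rfl⟩, rfl⟩, rfl⟩) |
        ⟨x, ⟨y, ⟨a, ha, rfl⟩, z, ⟨b, hb, rfl⟩, rfl⟩, rfl⟩)
      · exact ⟨a, ha, b, hb, Or.inl rfl⟩
      · exact ⟨a, ha, b, hb, Or.inr (Or.inl rfl)⟩
      · exact ⟨a, ha, b, hb, Or.inr (Or.inr rfl)⟩
    · rintro ⟨a, ha, b, hb, (rfl | rfl | rfl)⟩
      · exact Or.inl (Or.inl ⟨a, ⟨a, ha, rfl⟩, b, ⟨b, hb, rfl⟩, rfl⟩)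
      · exact Or.inl (Or.inr ⟨(a : ℤ) + b, ⟨a, ⟨a, ha, rfl⟩, b, ⟨b, hb, rfl⟩, rfl⟩, rfl⟩)
      · exact Or.inr ⟨(a : ℤ) + b, ⟨a, ⟨a, ha, rfl⟩, b, ⟨b, hb, rfl⟩, rfl⟩, rfl⟩
  constructor
  · intro hDD
    constructor
    · intro i hi
      rw [Finset.mem_Icc] at hi
      obtain ⟨k, hk⟩ : ∃ k : ℕ, (k : ℤ) = L - i := ⟨(L - i).toNat, by omega⟩
      have hkmem : k ∈ D + D := by
        rw [hDD, Finset.mem_Icc]; omega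
      rw [hcover] at hkmem
      rw [hC1mem]
      rcases hkmem with ⟨a, ha, b, hb, rfl⟩ | ⟨a, ha, b, hb, hk2⟩ | ⟨a, ha, b, hb, hk2⟩
      · exact ⟨a, ha, b, hb, Or.inr (Or.inr (by push_cast at hk; omega))⟩
      · exact ⟨b, hb, a, ha, Or.inl (by omega)⟩
      · exact ⟨a, ha, b, hb, Or.inr (Or.inl (by omega))⟩
    · intro k hk
      rw [Finset.mem_range] at hk
      have hkmem : k ∈ D + D := by rw [hDD, Finset.mem_Icc]; omega
      rw [hcover] at hkmem
      rw [Finset.mem_add]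
      rcases hkmem with ⟨a, ha, b, hb, rfl⟩ | ⟨a, ha, b, hb, hk2⟩ | ⟨a, ha, b, hb, hk2⟩
      · exact ⟨a, ha, b, hb, rfl⟩
      · exfalso; have := hgM b hb; omega
      · exfalso; have := hgM a ha; have := hgM b hb; omega
  · rintro ⟨hC1, hC2⟩
    apply Finset.Subset.antisymm
    · intro k hk
      rw [hcover] at hk
      rw [Finset.mem_Icc]
      rcases hk with ⟨a, ha, b, hb, rfl⟩ | ⟨a, ha, b, hb, hk2⟩ | ⟨a, ha, b, hb, hk2⟩ <;>
        · have := hgM a ha; have := hgM b hb; omega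
    · intro k hk
      rw [Finset.mem_Icc] at hk
      rw [hcover]
      by_cases h1 : k < lam
      · have hmem := hC2 (Finset.mem_range.mpr h1)
        rw [Finset.mem_add] at hmem
        obtain ⟨a, ha, b, hb, hab⟩ := hmem
        exact Or.inl ⟨a, ha, b, hb, hab.symm⟩
      · by_cases h2 : 2 * L - lam < k
        · have hk' : 2 * L - k < lam := by omega
          have hmem := hC2 (Finset.mem_range.mpr hk')
          rw [Finset.mem_add] at hmem
          obtain ⟨a, ha, b, hb, hab⟩ := hmem
          refine Or.inr (Or.inr ⟨a, ha, b, hb, ?_⟩)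
          have := hgM a ha; have := hgM b hb
          omega
        · by_cases h3 : k ≤ L
          · have hi : ((L : ℤ) - k) ∈ Finset.Icc (0 : ℤ) (M : ℤ) := by
              rw [Finset.mem_Icc]; omega
            have hmem := hC1 hi
            rw [hC1mem] at hmem
            obtain ⟨a, ha, b, hb, hcase⟩ := hmem
            have haM := hgM a ha; have hbM := hgM b hb
            rcases hcase with h | h | h
            · exact Or.inr (Or.inl ⟨b, hb, a, ha, by omega⟩)
            · exact Or.inr (Or.inr ⟨a, ha, b, hb, by omega⟩)
            · exact Or.inl ⟨a, ha, b, hb, by omega⟩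
          · have hi : ((k : ℤ) - L) ∈ Finset.Icc (0 : ℤ) (M : ℤ) := by
              rw [Finset.mem_Icc]; omega
            have hmem := hC1 hi
            rw [hC1mem] at hmem
            obtain ⟨a, ha, b, hb, hcase⟩ := hmem
            have haM := hgM a ha; have hbM := hgM b hb
            rcases hcase with h | h | h
            · exact Or.inr (Or.inl ⟨a, ha, b, hb, by omega⟩)
            · exact Or.inl ⟨a, ha, b, hb, by omega⟩
            · exact Or.inr (Or.inr ⟨a, ha, b, hb, by omega⟩)
end

section
/- Let G be a finite set of non-negative integers with 0 ∈ G whose sum co-array is contiguous (G + G = {0, ..., 2 max G}), and let λ ≤ max G + 1. Then the symmetric array D = G ∪ (max G - G + λ) has a contiguous sum co-array: D + D = {0, ..., 2(max G + λ)}. -/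
open Pointwise

theorem stmt7 (G : Finset ℕ) (h0 : 0 ∈ G)
    (M : ℕ) (hM : G.max = (M : WithBot ℕ))
    (hsum : G + G = Finset.Icc 0 (2 * M))
    (lam : ℕ) (hlam : lam ≤ M + 1) :
    (G ∪ G.image (fun g => M - g + lam)) + (G ∪ G.image (fun g => M - g + lam))
      = Finset.Icc 0 (2 * (M + lam)) := by
  have hle : ∀ g ∈ G, g ≤ M := fun g hg => by
    have := Finset.le_max hg
    rw [hM] at this
    exact WithBot.coe_le_coe.mp this
  ext n
  simp only [Finset.mem_Icc, Nat.zero_le, true_and]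
  constructor
  · intro hn
    rw [Finset.mem_add] at hn
    obtain ⟨a, ha, b, hb, rfl⟩ := hn
    have hda : ∀ x ∈ G ∪ G.image (fun g => M - g + lam), x ≤ M + lam := by
      intro x hx
      rcases Finset.mem_union.1 hx with h | h
      · exact le_trans (hle x h) (Nat.le_add_right _ _)
      · obtain ⟨g, hg, rfl⟩ := Finset.mem_image.1 h
        omega
    have h1 := hda a ha
    have h2 := hda b hb
    omega
  · intro hn
    rw [Finset.mem_add]
    by_cases h1 : n ≤ 2 * M
    · have : n ∈ G + G := by rw [hsum]; simp [h1]
      obtain ⟨a, ha, b, hb, h⟩ := Finset.mem_add.1 this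
      exact ⟨a, Finset.mem_union_left _ ha, b, Finset.mem_union_left _ hb, h⟩
    · by_cases h2 : 2 * lam ≤ n
      · have hm : 2 * M + 2 * lam - n ∈ G + G := by
          rw [hsum]; simp only [Finset.mem_Icc, Nat.zero_le, true_and]; omega
        obtain ⟨a, ha, b, hb, h⟩ := Finset.mem_add.1 hm
        refine ⟨M - a + lam, Finset.mem_union_right _ (Finset.mem_image.2 ⟨a, ha, rfl⟩),
          M - b + lam, Finset.mem_union_right _ (Finset.mem_image.2 ⟨b, hb, rfl⟩), ?_⟩
        have := hle a ha
        have := hle b hb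
        omega
      · refine ⟨0, Finset.mem_union_left _ h0,
          M - 0 + lam, Finset.mem_union_right _ (Finset.mem_image.2 ⟨0, h0, rfl⟩), ?_⟩
        omega
end

section
/- For integers N1 ≥ 1 and N2 ≥ 1, the Concatenated Nested Array D_CNA with parameters N1, N2 has a contiguous sum co-array: D_CNA + D_CNA = {0, 1, ..., 2L} where L = (N1+1)(N2+1) - 2. -/
open Pointwise

theorem stmt11 (N1 N2 : ℕ) (h1 : 1 ≤ N1) (h2 : 1 ≤ N2)
    (D1 D2 D : Finset ℕ)
    (hD1 : D1 = Finset.range N1)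
    (hD2 : D2 = (Finset.range N2).image (fun i => i * (N1 + 1)))
    (hD : D = D1 ∪ D2.image (· + N1) ∪ D1.image (· + N2 * (N1 + 1))) :
    D + D = Finset.Icc 0 (2 * ((N1 + 1) * (N2 + 1) - 2)) := by
  subst hD1 hD2
  set L := (N1 + 1) * (N2 + 1) - 2 with hLdef
  obtain ⟨M, hM⟩ : ∃ M, M = N1 * N2 := ⟨_, rfl⟩
  have hexp : (N1 + 1) * (N2 + 1) = N1 * N2 + N1 + N2 + 1 := by ring
  have hL1 : L + 2 = M + N1 + N2 + 1 := by rw [hLdef, hexp, ← hM]; omega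
  have hN2m : N2 * (N1 + 1) = M + N2 := by rw [hM]; ring
  -- membership characterization
  have hmem : ∀ a : ℕ, a ∈ D ↔
      (a < N1 ∨ (∃ i, i < N2 ∧ a = i * (N1 + 1) + N1) ∨ (∃ j, j < N1 ∧ a = j + N2 * (N1 + 1))) := by
    intro a
    rw [hD]
    simp only [Finset.mem_union, Finset.mem_image, Finset.mem_range, exists_exists_and_eq_and]
    constructor
    · rintro ((h | ⟨i, hi, rfl⟩) | ⟨j, hj, rfl⟩)
      · exact Or.inl h
      · exact Or.inr (Or.inl ⟨i, hi, rfl⟩)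
      · exact Or.inr (Or.inr ⟨j, hj, rfl⟩)
    · rintro (h | ⟨i, hi, rfl⟩ | ⟨j, hj, rfl⟩)
      · exact Or.inl (Or.inl h)
      · exact Or.inl (Or.inr ⟨i, hi, rfl⟩)
      · exact Or.inr ⟨j, hj, rfl⟩
  -- upper bound
  have hub : ∀ a ∈ D, a ≤ L := by
    intro a ha
    rw [hmem] at ha
    rcases ha with h | ⟨i, hi, rfl⟩ | ⟨j, hj, rfl⟩
    · omega
    · have key : i * (N1 + 1) + (N1 + 1) = (i + 1) * (N1 + 1) := by ring
      have h2' : (i + 1) * (N1 + 1) ≤ N2 * (N1 + 1) := Nat.mul_le_mul_right _ (by omega)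
      rw [← key, hN2m] at h2'
      generalize i * (N1 + 1) = u at h2' ⊢
      omega
    · rw [hN2m]; omega
  -- symmetry
  have hsym : ∀ a ∈ D, L - a ∈ D := by
    intro a ha
    have hal := hub a ha
    rw [hmem] at ha ⊢
    rcases ha with h | ⟨i, hi, rfl⟩ | ⟨j, hj, rfl⟩
    · refine Or.inr (Or.inr ⟨N1 - 1 - a, by omega, ?_⟩)
      rw [hN2m]; omega
    · refine Or.inr (Or.inl ⟨N2 - 1 - i, by omega, ?_⟩)
      have hs : i + (N2 - 1 - i) + 1 = N2 := by omega
      have h5 : (i + (N2 - 1 - i) + 1) * (N1 + 1) = M + N2 := by rw [hs, hN2m]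
      have huv : i * (N1 + 1) + (N2 - 1 - i) * (N1 + 1) + (N1 + 1) = M + N2 := by
        rw [← h5]; ring
      generalize i * (N1 + 1) = u at huv hal ⊢
      generalize (N2 - 1 - i) * (N1 + 1) = v at huv ⊢
      omega
    · refine Or.inl ?_
      rw [hN2m] at hal ⊢
      omega
  -- coverage of [0, L]
  have hcov : ∀ t, t ≤ L → ∃ a ∈ D, ∃ b ∈ D, a + b = t := by
    intro t ht
    have hzero : (0 : ℕ) ∈ D := by rw [hmem]; exact Or.inl (by omega)
    obtain ⟨q, r, hrlt, hqr⟩ : ∃ q r, r < N1 + 1 ∧ (N1 + 1) * q + r = t :=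
      ⟨_, _, Nat.mod_lt _ (by omega), Nat.div_add_mod t (N1 + 1)⟩
    have hqle : q ≤ N2 := by
      by_contra hc
      push_neg at hc
      have h3 : (N1 + 1) * (N2 + 1) ≤ (N1 + 1) * q := Nat.mul_le_mul_left _ (by omega)
      rw [hexp, ← hM] at h3
      have h4 : M + N1 + N2 + 1 ≤ t := le_trans h3 (Nat.le.intro hqr)
      omega
    rcases Nat.eq_zero_or_pos q with hq0 | hqpos
    · -- t = r ≤ N1
      rw [hq0, Nat.mul_zero, Nat.zero_add] at hqr
      rcases Nat.lt_or_ge r N1 with hrN | hrN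
      · exact ⟨t, by rw [hmem]; exact Or.inl (by omega), 0, hzero, by omega⟩
      · -- r = N1
        have : t = N1 := by omega
        refine ⟨N1, ?_, 0, hzero, by omega⟩
        rw [hmem]
        exact Or.inr (Or.inl ⟨0, by omega, by ring⟩)
    · obtain ⟨q', rfl⟩ : ∃ q', q = q' + 1 := ⟨q - 1, by omega⟩
      by_cases hrN : r = N1
      · -- q < N2 needed
        have hqlt : q' + 1 < N2 := by
          rcases Nat.lt_or_ge (q' + 1) N2 with h | h
          · exact h
          · exfalso
            have : q' + 1 = N2 := by omega
            rw [this, Nat.mul_comm, hN2m, hrN] at hqr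
            omega
        refine ⟨(q' + 1) * (N1 + 1) + N1, ?_, 0, hzero, ?_⟩
        · rw [hmem]; exact Or.inr (Or.inl ⟨q' + 1, hqlt, rfl⟩)
        · rw [← hqr, hrN]; ring
      · by_cases hrN1 : r = N1 - 1
        · -- middle + middle
          refine ⟨q' * (N1 + 1) + N1, ?_, 0 * (N1 + 1) + N1, ?_, ?_⟩
          · rw [hmem]; exact Or.inr (Or.inl ⟨q', by omega, rfl⟩)
          · rw [hmem]; exact Or.inr (Or.inl ⟨0, by omega, rfl⟩)
          · obtain ⟨m, rfl⟩ : ∃ m, N1 = m + 1 := ⟨N1 - 1, by omega⟩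
            rw [← hqr, hrN1]
            simp only [Nat.add_sub_cancel]
            ring
        · -- r + 1 < N1
          have hr1 : r + 1 < N1 := by omega
          refine ⟨r + 1, ?_, q' * (N1 + 1) + N1, ?_, ?_⟩
          · rw [hmem]; exact Or.inl hr1
          · rw [hmem]; exact Or.inr (Or.inl ⟨q', by omega, rfl⟩)
          · rw [← hqr]; ring
  -- conclusion
  ext s
  rw [Finset.mem_add, Finset.mem_Icc]
  constructor
  · rintro ⟨a, ha, b, hb, rfl⟩
    have := hub a ha
    have := hub b hb
    omega
  · rintro ⟨-, hs⟩
    rcases le_or_gt s L with h | h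
    · exact hcov s h
    · obtain ⟨a, ha, b, hb, hab⟩ := hcov (2 * L - s) (by omega)
      refine ⟨L - a, hsym a ha, L - b, hsym b hb, ?_⟩
      have := hub a ha
      have := hub b hb
      omega
end

section
/- For integers N1 ≥ 1 and N2 ≥ 1, the Concatenated Nested Array with parameters N1, N2 is symmetric: D_CNA = {L - d : d ∈ D_CNA} where L = (N1+1)(N2+1) - 2. -/
open Pointwise

theorem stmt12 (N1 N2 : ℕ) (h1 : 1 ≤ N1) (h2 : 1 ≤ N2)
    (D1 D2 D : Finset ℕ)
    (hD1 : D1 = Finset.range N1)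
    (hD2 : D2 = (Finset.range N2).image (fun i => i * (N1 + 1)))
    (hD : D = D1 ∪ D2.image (· + N1) ∪ D1.image (· + N2 * (N1 + 1))) :
    D = D.image (fun d => ((N1 + 1) * (N2 + 1) - 2) - d) := by
  subst hD1 hD2 hD
  have hL : (N1 + 1) * (N2 + 1) = N2 * (N1 + 1) + N1 + 1 := by ring
  ext a
  simp only [Finset.mem_union, Finset.mem_image, Finset.mem_range]
  constructor
  · rintro ((ha | ⟨x, ⟨i, hi, rfl⟩, rfl⟩) | ⟨i, hi, rfl⟩)
    · exact ⟨(N1 - 1 - a) + N2 * (N1 + 1), Or.inr ⟨N1 - 1 - a, by omega, rfl⟩, by omega⟩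
    · refine ⟨(N2 - 1 - i) * (N1 + 1) + N1, Or.inl (Or.inr ⟨(N2 - 1 - i) * (N1 + 1),
        ⟨N2 - 1 - i, by omega, rfl⟩, rfl⟩), ?_⟩
      set j := N2 - 1 - i with hjd
      have hj : N2 = i + j + 1 := by omega
      have hL2 : (N1 + 1) * (N2 + 1) =
          i * (N1 + 1) + j * (N1 + 1) + 2 * N1 + 2 := by rw [hj]; ring
      omega
    · exact ⟨N1 - 1 - i, Or.inl (Or.inl (by omega)), by omega⟩
  · rintro ⟨d, (hd | ⟨x, ⟨i, hi, rfl⟩, rfl⟩) | ⟨i, hi, rfl⟩, rfl⟩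
    · exact Or.inr ⟨N1 - 1 - d, by omega, by omega⟩
    · refine Or.inl (Or.inr ⟨(N2 - 1 - i) * (N1 + 1), ⟨N2 - 1 - i, by omega, rfl⟩, ?_⟩)
      set j := N2 - 1 - i with hjd
      have hj : N2 = i + j + 1 := by omega
      have hL2 : (N1 + 1) * (N2 + 1) =
          i * (N1 + 1) + j * (N1 + 1) + 2 * N1 + 2 := by rw [hj]; ring
      omega
    · exact Or.inl (Or.inl (by omega))
end

section
/- Let N1 ≥ 1, N2 ≥ 1, and let D4 = {0, N1, 2N1, ..., N1²} and D2 = {0, N1+1, ..., (N2-1)(N1+1)}. Then D4 + D2 ⊇ {N1², N1² + 1, ..., (N2-1)(N1+1)} whenever N2 ≥ N1 (i.e., every integer in that range is a sum k·N1 + l·(N1+1) with 0 ≤ k ≤ N1, 0 ≤ l ≤ N2 - 1). -/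
open Pointwise

lemma stmt15_aux (N1 : ℕ) (h1 : 1 ≤ N1) :
    ∀ n, N1 * N1 ≤ n → ∃ k l, k ≤ N1 ∧ n = k * N1 + l * (N1 + 1) := by
  intro n
  induction n using Nat.strong_induction_on with
  | _ n ih =>
    intro hn
    by_cases hsmall : n ≤ N1 * N1 + N1
    · obtain ⟨s, hs⟩ : ∃ s, N1 = s + (n - N1 * N1) := ⟨N1 - (n - N1 * N1), by omega⟩
      refine ⟨s, n - N1 * N1, by omega, ?_⟩
      have h2 : s * N1 + (n - N1 * N1) * (N1 + 1)
          = (s + (n - N1 * N1)) * N1 + (n - N1 * N1) := by ring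
      rw [h2, ← hs]
      omega
    · obtain ⟨k, l, hk, heq⟩ := ih (n - (N1 + 1)) (by omega) (by omega)
      refine ⟨k, l + 1, hk, ?_⟩
      have h3 : k * N1 + (l + 1) * (N1 + 1) = k * N1 + l * (N1 + 1) + (N1 + 1) := by ring
      omega

theorem stmt15 (N1 N2 : ℕ) (h1 : 1 ≤ N1) (h2 : 1 ≤ N2) (h12 : N1 ≤ N2)
    (D4 D2 : Finset ℕ)
    (hD4 : D4 = (Finset.range (N1 + 1)).image (fun k => k * N1))
    (hD2 : D2 = (Finset.range N2).image (fun l => l * (N1 + 1))) :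
    Finset.Icc (N1 ^ 2) ((N2 - 1) * (N1 + 1)) ⊆ D4 + D2 := by
  intro n hn
  rw [Finset.mem_Icc] at hn
  have hn1 : N1 * N1 ≤ n := by rw [pow_two] at hn; exact hn.1
  obtain ⟨k, l, hk, heq⟩ := stmt15_aux N1 h1 n hn1
  have hl : l * (N1 + 1) ≤ (N2 - 1) * (N1 + 1) := le_trans (by omega) hn.2
  have hl2 : l ≤ N2 - 1 := Nat.le_of_mul_le_mul_right hl (by omega)
  rw [hD4, hD2, Finset.mem_add]
  refine ⟨k * N1, ?_, l * (N1 + 1), ?_, by omega⟩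
  · exact Finset.mem_image.2 ⟨k, Finset.mem_range.2 (by omega), rfl⟩
  · exact Finset.mem_image.2 ⟨l, Finset.mem_range.2 (by omega), rfl⟩
end

section
/- Let N1 ≥ 1, N2 ≥ 1, N3 ≥ 0 and let G be the Kløve-Mossige array: G = D_CNA ∪ (D3 + 2·max D_CNA + 1) where D_CNA is the CNA with parameters N1, N2 and D3 = ⋃_{i=1}^{N3} ({0, N1, ..., N1²} + (i-1)(N1² + max D_CNA + 1)). Then the difference co-array of G is contiguous: G - G = {-max G, ..., max G}. -/
open Pointwise

theorem stmt16 (N1 N2 N3 : ℕ) (h1 : 1 ≤ N1) (h2 : 1 ≤ N2)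
    (D1 D2 DCNA D3 G : Finset ℕ) (M : ℕ)
    (hD1 : D1 = Finset.range N1)
    (hD2 : D2 = (Finset.range N2).image (fun i => i * (N1 + 1)))
    (hCNA : DCNA = D1 ∪ D2.image (· + N1) ∪ D1.image (· + N2 * (N1 + 1)))
    (hM : DCNA.max = (M : WithBot ℕ))
    (hD3 : D3 = (Finset.range N3).biUnion
      (fun i => (Finset.range (N1 + 1)).image
        (fun j => j * N1 + i * (N1 ^ 2 + M + 1))))
    (hG : G = DCNA ∪ D3.image (· + (2 * M + 1)))
    (Lg : ℕ) (hLg : G.max = (Lg : WithBot ℕ)) :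
    G.image ((↑) : ℕ → ℤ) - G.image ((↑) : ℕ → ℤ)
      = Finset.Icc (-(Lg : ℤ)) (Lg : ℤ) := by
  set P := N1 ^ 2 + M + 1 with hP
  -- membership helpers
  have memD1 : ∀ x, x < N1 → x ∈ DCNA := by
    intro x hx
    rw [hCNA]
    refine Finset.mem_union_left _ (Finset.mem_union_left _ ?_)
    rw [hD1]; exact Finset.mem_range.2 hx
  have memD2 : ∀ i, i < N2 → i * (N1 + 1) + N1 ∈ DCNA := by
    intro i hi
    rw [hCNA]
    refine Finset.mem_union_left _ (Finset.mem_union_right _ ?_)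
    simp only [hD2, Finset.mem_image, Finset.mem_range]
    exact ⟨i * (N1 + 1), ⟨i, hi, rfl⟩, rfl⟩
  have memTop : ∀ x, x < N1 → x + N2 * (N1 + 1) ∈ DCNA := by
    intro x hx
    rw [hCNA]
    refine Finset.mem_union_right _ ?_
    simp only [hD1, Finset.mem_image, Finset.mem_range]
    exact ⟨x, hx, rfl⟩
  have hDCNA_le : ∀ x ∈ DCNA, x + 1 ≤ N2 * (N1 + 1) + N1 := by
    intro x hx
    rw [hCNA] at hx
    simp only [hD1, hD2, Finset.mem_union, Finset.mem_image, Finset.mem_range] at hx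
    have hbase : N1 + 1 ≤ N2 * (N1 + 1) := by
      calc N1 + 1 = 1 * (N1 + 1) := by ring
      _ ≤ N2 * (N1 + 1) := Nat.mul_le_mul h2 le_rfl
    rcases hx with (hx | ⟨y, ⟨i, hi, rfl⟩, rfl⟩) | ⟨y, hy, rfl⟩
    · omega
    · have h3 : (i + 1) * (N1 + 1) ≤ N2 * (N1 + 1) := Nat.mul_le_mul hi le_rfl
      have e : (i + 1) * (N1 + 1) = i * (N1 + 1) + N1 + 1 := by ring
      omega
    · omega
  -- value of M
  have hMval : M + 1 = N2 * (N1 + 1) + N1 := by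
    have hMmem : M ∈ DCNA := Finset.mem_of_max hM
    have h1' : M + 1 ≤ N2 * (N1 + 1) + N1 := hDCNA_le _ hMmem
    have hE : (N1 - 1) + N2 * (N1 + 1) ∈ DCNA := memTop _ (by omega)
    have h2' : (N1 - 1) + N2 * (N1 + 1) ≤ M := by
      have := Finset.le_max hE
      rw [hM] at this
      exact WithBot.coe_le_coe.1 this
    omega
  have hDle : ∀ x ∈ DCNA, x ≤ M := by
    intro x hx; have := hDCNA_le x hx; omega
  have hDG : ∀ x ∈ DCNA, x ∈ G := by
    intro x hx; rw [hG]; exact Finset.mem_union_left _ hx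
  have memD3G : ∀ i, i < N3 → ∀ j, j ≤ N1 →
      j * N1 + i * P + (2 * M + 1) ∈ G := by
    intro i hi j hj
    rw [hG]
    refine Finset.mem_union_right _ ?_
    simp only [hD3, Finset.mem_image, Finset.mem_biUnion, Finset.mem_range]
    exact ⟨j * N1 + i * P, ⟨i, hi, ⟨j, by omega, rfl⟩⟩, rfl⟩
  -- Lemma 1: for every u ≤ M there is j ≤ N1 with u + j*N1 ∈ DCNA
  have cover : ∀ u, u ≤ M → ∃ j, j ≤ N1 ∧ u + j * N1 ∈ DCNA := by
    intro u hu
    by_cases hcase : u < N1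
    · exact ⟨0, by omega, by simpa using memD1 u hcase⟩
    · set v := u - N1 with hv
      have hvlt : v < N2 * (N1 + 1) := by omega
      obtain ⟨q, r, hqr, hrlt⟩ : ∃ q r, (N1 + 1) * q + r = v ∧ r < N1 + 1 :=
        ⟨v / (N1 + 1), v % (N1 + 1), Nat.div_add_mod v (N1 + 1), Nat.mod_lt _ (by omega)⟩
      by_cases hsmall : q + r < N2
      · refine ⟨r, by omega, ?_⟩
        have e : (q + r) * (N1 + 1) + N1 = N1 + ((N1 + 1) * q + r) + r * N1 := by ring
        have hrw : u + r * N1 = (q + r) * (N1 + 1) + N1 := by omega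
        rw [hrw]; exact memD2 (q + r) hsmall
      · have hqlt : q < N2 := by
          by_contra hq
          push_neg at hq
          have h3 : N2 * (N1 + 1) ≤ (N1 + 1) * q := by
            calc N2 * (N1 + 1) = (N1 + 1) * N2 := by ring
            _ ≤ (N1 + 1) * q := Nat.mul_le_mul le_rfl hq
          omega
        set m := N2 - q with hm'
        have hmr : m ≤ r := by omega
        have hm1 : 1 ≤ m := by omega
        refine ⟨m - 1, by omega, ?_⟩
        have e1 : N2 * (N1 + 1) = (q + m) * (N1 + 1) := by
          congr 1; omega
        have e2 : (q + m) * (N1 + 1) = (N1 + 1) * q + m * N1 + m := by ring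
        have e3 : (m - 1) * N1 + N1 = m * N1 := by
          have h5 : m - 1 + 1 = m := by omega
          calc (m - 1) * N1 + N1 = (m - 1 + 1) * N1 := by ring
          _ = m * N1 := by rw [h5]
        have hrw : u + (m - 1) * N1 = (r - m) + N2 * (N1 + 1) := by omega
        rw [hrw]; exact memTop (r - m) (by omega)
  -- the CNA difference coarray is contiguous
  have cnadiff : ∀ d, d ≤ M → ∃ b ∈ DCNA, b + d ∈ DCNA := by
    intro d hd
    obtain ⟨q, r, hqr, hrlt⟩ : ∃ q r, (N1 + 1) * q + r = d ∧ r < N1 + 1 :=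
      ⟨d / (N1 + 1), d % (N1 + 1), Nat.div_add_mod d (N1 + 1), Nat.mod_lt _ (by omega)⟩
    have e : q * (N1 + 1) + N1 = (N1 + 1) * q + N1 := by ring
    by_cases hq : q < N2
    · by_cases hr : r = 0
      · refine ⟨N1, by simpa using memD2 0 h2, ?_⟩
        have hrw : N1 + d = q * (N1 + 1) + N1 := by omega
        rw [hrw]; exact memD2 q hq
      · refine ⟨N1 - r, memD1 _ (by omega), ?_⟩
        have hrw : (N1 - r) + d = q * (N1 + 1) + N1 := by omega
        rw [hrw]; exact memD2 q hq
    · have hqe : ¬ (N2 < q) := by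
        intro hq2
        have h3 : (N1 + 1) * (N2 + 1) ≤ (N1 + 1) * q := Nat.mul_le_mul le_rfl (by omega)
        have e2 : (N1 + 1) * (N2 + 1) = N2 * (N1 + 1) + N1 + 1 := by ring
        omega
      have hqeq : q = N2 := by omega
      subst hqeq
      have e2 : (N1 + 1) * q = q * (N1 + 1) := Nat.mul_comm _ _
      have hrN1 : r < N1 := by omega
      refine ⟨0, memD1 0 (by omega), ?_⟩
      have hrw : 0 + d = r + q * (N1 + 1) := by omega
      rw [hrw]; exact memTop r hrN1
  -- upper bound for elements of G
  have hG_le : ∀ x ∈ G, x ≤ M ∨ (1 ≤ N3 ∧ x ≤ N1 ^ 2 + (N3 - 1) * P + (2 * M + 1)) := by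
    intro x hx
    rw [hG] at hx
    rcases Finset.mem_union.1 hx with hx | hx
    · exact Or.inl (hDle _ hx)
    · simp only [hD3, Finset.mem_image, Finset.mem_biUnion, Finset.mem_range] at hx
      obtain ⟨y, ⟨i, hi, j, hj, rfl⟩, rfl⟩ := hx
      refine Or.inr ⟨by omega, ?_⟩
      have b1 : j * N1 ≤ N1 * N1 := Nat.mul_le_mul (by omega) le_rfl
      have b2 : i * P ≤ (N3 - 1) * P := Nat.mul_le_mul (by omega) le_rfl
      have e : N1 * N1 = N1 ^ 2 := by ring
      omega
  have hleLg : ∀ x ∈ G, x ≤ Lg := by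
    intro x hx
    have := Finset.le_max hx
    rw [hLg] at this
    exact WithBot.coe_le_coe.1 this
  -- main representation lemma
  have key : ∀ d, d ≤ Lg → ∃ b ∈ G, b + d ∈ G := by
    intro d hd
    by_cases hdM : d ≤ M
    · obtain ⟨b, hb, hbd⟩ := cnadiff d hdM
      exact ⟨b, hDG _ hb, hDG _ hbd⟩
    · have hLgG : Lg ∈ G := Finset.mem_of_max hLg
      rcases hG_le Lg hLgG with hc | ⟨hN3, hLgle⟩
      · omega
      · set t := d - (M + 1) with ht
        have htle : t ≤ N1 ^ 2 + (N3 - 1) * P + M := by omega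
        obtain ⟨i, w, hqr, hwlt⟩ : ∃ i w, P * i + w = t ∧ w < P :=
          ⟨t / P, t % P, Nat.div_add_mod t P, Nat.mod_lt _ (by omega)⟩
        have e4 : (N3 - 1) * P + P = P * N3 := by
          have h5 : N3 - 1 + 1 = N3 := by omega
          calc (N3 - 1) * P + P = (N3 - 1 + 1) * P := by ring
          _ = N3 * P := by rw [h5]
          _ = P * N3 := Nat.mul_comm _ _
        have hiN3 : i < N3 := by
          by_contra hcon
          push_neg at hcon
          have h6 : P * N3 ≤ P * i := Nat.mul_le_mul le_rfl hcon
          omega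
        have eip : P * i = i * P := Nat.mul_comm _ _
        by_cases hw : w ≤ M
        · obtain ⟨j, hj, hc⟩ := cover (M - w) (by omega)
          refine ⟨(M - w) + j * N1, hDG _ hc, ?_⟩
          have hrw : (M - w) + j * N1 + d = j * N1 + i * P + (2 * M + 1) := by omega
          rw [hrw]; exact memD3G i hiN3 j hj
        · obtain ⟨qj, s, hqs, hslt⟩ : ∃ qj s, N1 * qj + s = (w - M) + N1 - 1 ∧ s < N1 :=
            ⟨_, _, Nat.div_add_mod _ N1, Nat.mod_lt _ (by omega)⟩
          have ej : N1 * qj = qj * N1 := Nat.mul_comm _ _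
          have hjle : qj ≤ N1 := by
            have e5 : N1 * (N1 + 1) = N1 ^ 2 + N1 := by ring
            have h7 : N1 * qj < N1 * (N1 + 1) := by omega
            have := Nat.lt_of_mul_lt_mul_left h7
            omega
          refine ⟨qj * N1 - (w - M), hDG _ (memD1 _ (by omega)), ?_⟩
          have hrw : qj * N1 - (w - M) + d = qj * N1 + i * P + (2 * M + 1) := by omega
          rw [hrw]; exact memD3G i hiN3 qj hjle
  -- finish
  ext d
  simp only [Finset.mem_sub, Finset.mem_image, Finset.mem_Icc]
  constructor
  · rintro ⟨a, ⟨x, hx, rfl⟩, b, ⟨y, hy, rfl⟩, rfl⟩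
    have hx' := hleLg x hx
    have hy' := hleLg y hy
    omega
  · rintro ⟨hl, hr⟩
    rcases le_or_gt 0 d with hd | hd
    · obtain ⟨b, hb, hbd⟩ := key d.toNat (by omega)
      exact ⟨((b + d.toNat : ℕ) : ℤ), ⟨_, hbd, rfl⟩, (b : ℤ), ⟨b, hb, rfl⟩, by push_cast; omega⟩
    · obtain ⟨b, hb, hbd⟩ := key (-d).toNat (by omega)
      exact ⟨(b : ℤ), ⟨b, hb, rfl⟩, ((b + (-d).toNat : ℕ) : ℤ), ⟨_, hbd, rfl⟩, by push_cast; omega⟩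
end

section
/- For integers N1 ≥ 1, N2 ≥ 1, N3 ≥ 0, the Kløve array with parameters N1, N2, N3 has aperture L = (N1+1)(N3(N1+N2) + 3N2 + 3) - 5 and exactly N = 2(2N1 + N2) + N3(N1+1) elements. -/
/-!
The Kløve array is a concatenation of blocks placed side by side: every block lies strictly
below the offset of the next one, so the blocks are pairwise disjoint (their sizes add up) and
the largest element is the largest element of the last block, shifted by its offset. The
middle part `D3` is itself a concatenation of `N3` copies of `{0, N1, …, N1²}` with period
`N1² + M + 1 > N1²`.
-/

open Finset

namespace Finset

theorem max_eq_of_isGreatest {α : Type*} [LinearOrder α] {s : Finset α} {a : α}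
    (h : IsGreatest (s : Set α) a) : s.max = a :=
  le_antisymm (Finset.max_le fun _ hx => WithBot.coe_le_coe.mpr (h.2 hx)) (le_max h.1)

variable {A B : Finset ℕ} {c : ℕ}

theorem disjoint_image_add_of_forall_lt (hA : ∀ x ∈ A, x < c) :
    Disjoint A (B.image (· + c)) := by
  rw [disjoint_left]
  intro _ hx hy
  obtain ⟨y, -, rfl⟩ := mem_image.mp hy
  have := hA _ hx
  omega

theorem card_union_image_add_of_forall_lt (hA : ∀ x ∈ A, x < c) :
    #(A ∪ B.image (· + c)) = #A + #B := by
  rw [card_union_of_disjoint (disjoint_image_add_of_forall_lt hA),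
    card_image_of_injective _ (add_left_injective c)]

theorem isGreatest_union_image_add {m : ℕ} (hA : ∀ x ∈ A, x < c)
    (hB : IsGreatest (B : Set ℕ) m) :
    IsGreatest ((A ∪ B.image (· + c) : Finset ℕ) : Set ℕ) (m + c) := by
  refine ⟨mem_coe.mpr (mem_union_right _ (mem_image_of_mem _ hB.1)), fun x hx => ?_⟩
  rcases mem_union.mp hx with hx | hx
  · exact (hA x hx).le.trans (Nat.le_add_left c m)
  obtain ⟨y, hy, rfl⟩ := mem_image.mp hx
  exact Nat.add_le_add_right (hB.2 hy) c

theorem forall_lt_union_image_add {d : ℕ} (hA : ∀ x ∈ A, x < c) (hB : ∀ x ∈ B, x < d) :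
    ∀ x ∈ A ∪ B.image (· + c), x < d + c := by
  intro x hx
  rcases mem_union.mp hx with hx | hx
  · exact (hA x hx).trans_le (Nat.le_add_left c d)
  obtain ⟨y, hy, rfl⟩ := mem_image.mp hx
  exact Nat.add_lt_add_right (hB y hy) c

variable {P n : ℕ}

theorem card_biUnion_range_image_add_mul (hB : ∀ x ∈ B, x < P) :
    #((range n).biUnion fun i => B.image (· + i * P)) = n * #B := by
  obtain rfl | ⟨b, hb⟩ := B.eq_empty_or_nonempty
  · simp [eq_empty_iff_forall_notMem]
  have hP : 0 < P := (Nat.zero_le b).trans_lt (hB b hb)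
  rw [card_biUnion, sum_const_nat (m := #B), card_range]
  · exact fun _ _ => card_image_of_injective _ (add_left_injective _)
  · intro i _ j _ hij
    simp only [Function.onFun, disjoint_left, mem_image]
    rintro _ ⟨x, hx, rfl⟩ ⟨y, hy, hxy⟩
    have hdiv := congrArg (· / P) hxy
    simp only [Nat.add_mul_div_right _ _ hP, Nat.div_eq_of_lt (hB x hx),
      Nat.div_eq_of_lt (hB y hy), zero_add] at hdiv
    exact hij hdiv.symm

theorem lt_mul_of_mem_biUnion_range_image_add_mul (hB : ∀ x ∈ B, x < P) {x : ℕ}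
    (hx : x ∈ (range n).biUnion fun i => B.image (· + i * P)) : x < n * P := by
  simp only [mem_biUnion, mem_range, mem_image] at hx
  obtain ⟨i, hi, y, hy, rfl⟩ := hx
  calc y + i * P < P + i * P := by linarith [hB y hy]
    _ = (i + 1) * P := by ring
    _ ≤ n * P := Nat.mul_le_mul_right P hi

end Finset

def concatenatedNestedArray (N1 N2 : ℕ) : Finset ℕ :=
  range N1 ∪ ((range N2).image (fun i => i * (N1 + 1))).image (· + N1) ∪
    (range N1).image (· + N2 * (N1 + 1))

section ConcatenatedNestedArray

variable {N1 N2 : ℕ}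

theorem forall_lt_of_mem_range_union_image_add (h2 : 1 ≤ N2) :
    ∀ x ∈ range N1 ∪ ((range N2).image (fun i => i * (N1 + 1))).image (· + N1),
      x < N2 * (N1 + 1) := by
  intro x hx
  simp only [mem_union, mem_image, mem_range] at hx
  rcases hx with hx | ⟨_, ⟨i, hi, rfl⟩, rfl⟩
  · nlinarith
  · nlinarith

theorem card_concatenatedNestedArray (h2 : 1 ≤ N2) :
    #(concatenatedNestedArray N1 N2) = 2 * N1 + N2 := by
  rw [concatenatedNestedArray,
    card_union_image_add_of_forall_lt (forall_lt_of_mem_range_union_image_add h2),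
    card_union_image_add_of_forall_lt fun x hx => mem_range.mp hx,
    card_image_of_injective _ (mul_left_injective₀ N1.succ_ne_zero), card_range, card_range]
  ring

theorem isGreatest_concatenatedNestedArray (h1 : 1 ≤ N1) (h2 : 1 ≤ N2) :
    IsGreatest (concatenatedNestedArray N1 N2 : Set ℕ) ((N1 + 1) * (N2 + 1) - 2) := by
  have hD1 : IsGreatest (range N1 : Set ℕ) (N1 - 1) :=
    ⟨mem_range.mpr (by omega), fun x hx => by have := mem_range.mp hx; omega⟩
  have hM : (N1 + 1) * (N2 + 1) - 2 = N1 - 1 + N2 * (N1 + 1) := by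
    rw [show (N1 + 1) * (N2 + 1) = N1 + 1 + N2 * (N1 + 1) by ring]
    omega
  rw [hM]
  exact isGreatest_union_image_add (forall_lt_of_mem_range_union_image_add h2) hD1

end ConcatenatedNestedArray

def kloeveMiddle (N1 P n : ℕ) : Finset ℕ :=
  (range n).biUnion fun i => (range (N1 + 1)).image fun j => j * N1 + i * P

section KloeveMiddle

variable {N1 P : ℕ}

theorem forall_lt_of_mem_range_image_mul (hP : N1 ^ 2 < P) :
    ∀ x ∈ (range (N1 + 1)).image (· * N1), x < P := by
  simp only [mem_image, mem_range]
  rintro _ ⟨j, hj, rfl⟩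
  nlinarith

theorem kloeveMiddle_eq_biUnion_image_add_mul (n : ℕ) :
    kloeveMiddle N1 P n =
      (range n).biUnion fun i => ((range (N1 + 1)).image (· * N1)).image (· + i * P) := by
  simp only [kloeveMiddle, image_image]
  rfl

theorem card_kloeveMiddle (h1 : 1 ≤ N1) (hP : N1 ^ 2 < P) (n : ℕ) :
    #(kloeveMiddle N1 P n) = n * (N1 + 1) := by
  rw [kloeveMiddle_eq_biUnion_image_add_mul,
    card_biUnion_range_image_add_mul (forall_lt_of_mem_range_image_mul hP),
    card_image_of_injective _ (mul_left_injective₀ (by omega : N1 ≠ 0)), card_range]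

theorem lt_mul_of_mem_kloeveMiddle (hP : N1 ^ 2 < P) {n x : ℕ} (hx : x ∈ kloeveMiddle N1 P n) :
    x < n * P := by
  rw [kloeveMiddle_eq_biUnion_image_add_mul] at hx
  exact lt_mul_of_mem_biUnion_range_image_add_mul (forall_lt_of_mem_range_image_mul hP) hx

end KloeveMiddle

theorem stmt17 (N1 N2 N3 : ℕ) (h1 : 1 ≤ N1) (h2 : 1 ≤ N2)
    (D1 D2 DCNA D3 DKA : Finset ℕ) (M : ℕ)
    (hD1 : D1 = Finset.range N1)
    (hD2 : D2 = (Finset.range N2).image (fun i => i * (N1 + 1)))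
    (hCNA : DCNA = D1 ∪ D2.image (· + N1) ∪ D1.image (· + N2 * (N1 + 1)))
    (hM : M = (N1 + 1) * (N2 + 1) - 2)
    (hD3 : D3 = (Finset.range N3).biUnion
      (fun i => (Finset.range (N1 + 1)).image
        (fun j => j * N1 + i * (N1 ^ 2 + M + 1))))
    (hKA : DKA = DCNA ∪ D3.image (· + (2 * M + 1)) ∪
      DCNA.image (· + ((N3 + 2) * M + N3 * (N1 ^ 2 + 1) + 1))) :
    DKA.max = (((N1 + 1) * (N3 * (N1 + N2) + 3 * N2 + 3) - 5 : ℕ) : WithBot ℕ) ∧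
    DKA.card = 2 * (2 * N1 + N2) + N3 * (N1 + 1) := by
  obtain rfl : DCNA = concatenatedNestedArray N1 N2 := by rw [hCNA, hD1, hD2]; rfl
  obtain rfl : D3 = kloeveMiddle N1 (N1 ^ 2 + M + 1) N3 := hD3
  have hP : N1 ^ 2 < N1 ^ 2 + M + 1 := by omega
  have hCNA_max : IsGreatest (concatenatedNestedArray N1 N2 : Set ℕ) M :=
    hM ▸ isGreatest_concatenatedNestedArray h1 h2
  have hCNA_lt : ∀ x ∈ concatenatedNestedArray N1 N2, x < 2 * M + 1 :=
    fun x hx => by linarith [hCNA_max.2 hx]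
  have hKA_lt : ∀ x ∈ concatenatedNestedArray N1 N2 ∪
      (kloeveMiddle N1 (N1 ^ 2 + M + 1) N3).image (· + (2 * M + 1)),
      x < (N3 + 2) * M + N3 * (N1 ^ 2 + 1) + 1 := by
    rw [show (N3 + 2) * M + N3 * (N1 ^ 2 + 1) + 1 = N3 * (N1 ^ 2 + M + 1) + (2 * M + 1) by ring]
    exact forall_lt_union_image_add hCNA_lt fun x => lt_mul_of_mem_kloeveMiddle hP
  have hAperture : M + ((N3 + 2) * M + N3 * (N1 ^ 2 + 1) + 1) + 5
      = (N1 + 1) * (N3 * (N1 + N2) + 3 * N2 + 3) := by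
    have hM2 : M + 2 = (N1 + 1) * (N2 + 1) := by rw [hM, Nat.sub_add_cancel (by nlinarith)]
    zify at hM2 ⊢
    linear_combination (N3 + 3 : ℤ) * hM2
  rw [hKA]
  constructor
  · rw [max_eq_of_isGreatest (isGreatest_union_image_add hKA_lt hCNA_max), ← hAperture,
      Nat.add_sub_cancel]
    rfl
  · rw [card_union_image_add_of_forall_lt hKA_lt, card_union_image_add_of_forall_lt hCNA_lt,
      card_concatenatedNestedArray h2, card_kloeveMiddle h1 hP]
    ring
end

section
/- The number of pairs (N1, N3) of non-negative integers with N1 ≤ (N-2)/4 and N3 ≤ (N - 4N1)/(N1 + 1) is at most (N+4)·log(N/2 + 2) - 3(N+2)/4 for all integers N ≥ 4, hence O(N log N). -/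
open Real

lemma midpt (m : ℝ) (hm : 1 ≤ m) :
    1 / m ≤ Real.log (m + 1/2) - Real.log (m - 1/2) := by
  have h0 : (0:ℝ) < m - 1/2 := by linarith
  have h1 : (0:ℝ) < m + 1/2 := by linarith
  have hm0 : (0:ℝ) < m := by linarith
  have hlog : Real.log (m + 1/2) - Real.log (m - 1/2)
      = ∫ t in (m - 1/2)..(m + 1/2), t⁻¹ := by
    rw [integral_inv_of_pos h0 h1, Real.log_div (ne_of_gt h1) (ne_of_gt h0)]
  rw [hlog]
  have hint : (∫ t in (m - 1/2)..(m + 1/2), (2*m - t)/m^2) = 1/m := by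
    rw [intervalIntegral.integral_div,
      intervalIntegral.integral_sub intervalIntegrable_const intervalIntegral.intervalIntegrable_id,
      intervalIntegral.integral_const, integral_id]
    field_simp
    ring
  rw [← hint]
  apply intervalIntegral.integral_mono_on (by linarith)
  · exact (Continuous.div_const (by continuity) _).intervalIntegrable _ _
  · apply intervalIntegral.intervalIntegrable_inv (f := fun x => x)
    · intro x hx
      rw [Set.uIcc_of_le (by linarith)] at hx
      have := hx.1; intro h; rw [h] at this; linarith
    · exact continuousOn_id
  · intro x hx
    have hx1 : m - 1/2 ≤ x := hx.1
    have hx2 : x ≤ m + 1/2 := hx.2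
    have hx0 : 0 < x := by linarith
    rw [div_le_iff₀ (by positivity), inv_mul_eq_div, le_div_iff₀ hx0]
    nlinarith [sq_nonneg (x - m)]

theorem stmt19 (N : ℕ) (hN : 4 ≤ N) :
    (((Finset.range (N + 1) ×ˢ Finset.range (N + 1)).filter
        (fun p => p.1 ≤ (N - 2) / 4 ∧ p.2 ≤ (N - 4 * p.1) / (p.1 + 1))).card : ℝ)
      ≤ ((N : ℝ) + 4) * Real.log ((N : ℝ) / 2 + 2) - 3 * ((N : ℝ) + 2) / 4 := by
  set M : ℕ := (N - 2) / 4 with hM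
  set g : ℕ → ℕ := fun x => (N - 4 * x) / (x + 1) with hg
  have hM4 : 4 * M + 2 ≤ N := by
    have := Nat.div_mul_le_self (N - 2) 4
    omega
  -- Step 1: cardinality bound by a sum
  have hcard : (((Finset.range (N + 1) ×ˢ Finset.range (N + 1)).filter
        (fun p => p.1 ≤ (N - 2) / 4 ∧ p.2 ≤ (N - 4 * p.1) / (p.1 + 1))).card : ℕ)
      ≤ ∑ x ∈ Finset.range (M + 1), (g x + 1) := by
    calc _ ≤ ((Finset.range (M+1)).biUnion
          (fun x => (Finset.range (g x + 1)).image (Prod.mk x))).card := by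
          apply Finset.card_le_card
          intro p hp
          simp only [Finset.mem_filter, Finset.mem_product, Finset.mem_range] at hp
          obtain ⟨⟨h1, h2⟩, h3, h4⟩ := hp
          exact Finset.mem_biUnion.mpr ⟨p.1, Finset.mem_range.mpr (by rw [hM]; omega),
            Finset.mem_image.mpr ⟨p.2, Finset.mem_range.mpr (by simp only [hg]; omega), by simp⟩⟩
      _ ≤ ∑ x ∈ Finset.range (M+1), ((Finset.range (g x + 1)).image (Prod.mk x)).card :=
          Finset.card_biUnion_le
      _ ≤ _ := Finset.sum_le_sum fun x _ => (Finset.card_image_le).trans (by simp)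
  -- Step 2: each term bound in ℝ
  have hterm : ∀ x ∈ Finset.range (M + 1),
      ((g x : ℝ) + 1) ≤ ((N:ℝ)+4) * (1/((x:ℝ)+1)) - 3 := by
    intro x hx
    have hx' : 4 * x + 2 ≤ N := by
      have := Finset.mem_range.mp hx; omega
    have h1 : ((g x : ℕ) : ℝ) ≤ (((N - 4*x : ℕ)) : ℝ) / (((x+1 : ℕ)) : ℝ) :=
      Nat.cast_div_le
    have h2 : (((N - 4*x : ℕ)) : ℝ) = (N:ℝ) - 4*x := by
      have : 4 * x ≤ N := by omega
      push_cast [this]; ring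
    have hx1 : (0:ℝ) < (x:ℝ) + 1 := by positivity
    have h3 : ((N:ℝ)+4) * (1/((x:ℝ)+1)) - 3 = ((N:ℝ) - 4*x)/((x:ℝ)+1) + 1 := by
      field_simp; ring
    rw [h3]
    rw [h2] at h1
    have : (((x+1 : ℕ)) : ℝ) = (x:ℝ) + 1 := by push_cast; ring
    rw [this] at h1
    linarith
  -- Step 3: harmonic sum bound
  have hharm : ∑ x ∈ Finset.range (M + 1), (1/((x:ℝ)+1))
      ≤ Real.log ((M:ℝ) + 1 + 1/2) - Real.log (1/2) := by
    have htel := Finset.sum_range_sub (f := fun x => Real.log ((x:ℝ) + 1/2)) (M+1)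
    calc ∑ x ∈ Finset.range (M + 1), (1/((x:ℝ)+1))
        ≤ ∑ x ∈ Finset.range (M + 1),
            (Real.log (((x:ℝ)+1) + 1/2) - Real.log ((x:ℝ) + 1/2)) := by
          apply Finset.sum_le_sum
          intro x _
          have := midpt ((x:ℝ)+1)
            (by have : (0:ℝ) ≤ (x:ℝ) := Nat.cast_nonneg x; linarith)
          have he : (x:ℝ) + 1 - 1/2 = (x:ℝ) + 1/2 := by ring
          rw [he] at this
          exact this
      _ = Real.log ((M:ℝ) + 1 + 1/2) - Real.log (1/2) := by
          have h0 : Real.log (((0:ℕ):ℝ) + 1/2) = Real.log (1/2) := by norm_num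
          have h1 : Real.log (((M+1:ℕ):ℝ) + 1/2) = Real.log ((M:ℝ) + 1 + 1/2) := by
            congr 1
            push_cast
            ring
          rw [← h0, ← h1, ← htel]
          apply Finset.sum_congr rfl
          intro x _
          congr 2
          push_cast
          ring
  -- Assemble
  have hsum : (((Finset.range (N + 1) ×ˢ Finset.range (N + 1)).filter
        (fun p => p.1 ≤ (N - 2) / 4 ∧ p.2 ≤ (N - 4 * p.1) / (p.1 + 1))).card : ℝ)
      ≤ ((N:ℝ)+4) * (Real.log ((M:ℝ) + 1 + 1/2) - Real.log (1/2)) - 3 * ((M:ℝ)+1) := by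
    calc (((Finset.range (N + 1) ×ˢ Finset.range (N + 1)).filter
        (fun p => p.1 ≤ (N - 2) / 4 ∧ p.2 ≤ (N - 4 * p.1) / (p.1 + 1))).card : ℝ)
        ≤ ((∑ x ∈ Finset.range (M + 1), (g x + 1) : ℕ) : ℝ) := by exact_mod_cast hcard
      _ = ∑ x ∈ Finset.range (M + 1), ((g x : ℝ) + 1) := by push_cast; ring
      _ ≤ ∑ x ∈ Finset.range (M + 1), (((N:ℝ)+4) * (1/((x:ℝ)+1)) - 3) :=
          Finset.sum_le_sum hterm
      _ = ((N:ℝ)+4) * (∑ x ∈ Finset.range (M + 1), (1/((x:ℝ)+1))) - 3 * ((M:ℝ)+1) := by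
          rw [Finset.sum_sub_distrib, ← Finset.mul_sum]
          simp [Finset.sum_const, Finset.card_range]
          ring
      _ ≤ _ := by
          have hA : (0:ℝ) ≤ (N:ℝ) + 4 := by positivity
          have := mul_le_mul_of_nonneg_left hharm hA
          linarith
  -- Step 4: final comparison
  have hlogeq : Real.log ((M:ℝ) + 1 + 1/2) - Real.log (1/2)
      = Real.log (2*(M:ℝ) + 3) := by
    rw [← Real.log_div (by positivity) (by norm_num)]
    congr 1
    ring
  rw [hlogeq] at hsum
  set u : ℝ := (N:ℝ)/2 + 2 with hu
  set v : ℝ := 2*(M:ℝ) + 3 with hv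
  have hu0 : (0:ℝ) < u := by positivity
  have hv0 : (0:ℝ) < v := by positivity
  have huv : v ≤ u := by
    have : (4*(M:ℝ) + 2 : ℝ) ≤ (N:ℝ) := by exact_mod_cast hM4
    rw [hu, hv]; linarith
  have hlog : (u - v)/u ≤ Real.log u - Real.log v := by
    have h := Real.log_le_sub_one_of_pos (show (0:ℝ) < v/u by positivity)
    rw [Real.log_div hv0.ne' hu0.ne'] at h
    have : (u - v)/u = 1 - v/u := by field_simp
    linarith
  have hmul : ((N:ℝ)+4) * ((u - v)/u) ≤ ((N:ℝ)+4) * (Real.log u - Real.log v) :=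
    mul_le_mul_of_nonneg_left hlog (by positivity)
  have hval : ((N:ℝ)+4) * ((u - v)/u) = 2 * (u - v) := by
    rw [hu]
    have : (N:ℝ)/2 + 2 ≠ 0 := by positivity
    field_simp
    ring
  have hd : (0:ℝ) ≤ u - v := by linarith
  rw [hval] at hmul
  have hexp : ((N:ℝ)+4) * (Real.log u - Real.log v)
      = ((N:ℝ)+4) * Real.log u - ((N:ℝ)+4) * Real.log v := by ring
  rw [hexp] at hmul
  have hMr : (4*(M:ℝ) + 2 : ℝ) ≤ (N:ℝ) := by exact_mod_cast hM4
  rw [hu, hv] at hmul hd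
  linarith [hsum, hmul, hd]
end
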